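/- arXiv:math/0405168 — 4 statements merged into one kernel-verified Lean document; each statement's English description precedes it below -/
import Mathlib

section
/- For every r ≥ 0, the identity (r/Γ(1+1/α)) · B(r+1-1/α, 1/α) = ∫₀^∞ ((1-1/α)·eˣ / (Γ(1+1/α)·(eˣ-1)^{2-1/α})) · (1 - e^{-xr}) dx holds, where B is the Beta function. -/
/-!
The substitution `u = e^{-x}` identifies `∫₀^∞ e^{-xr} (eˣ - 1)^p dx` with the Beta integral
`B(r - p, p + 1)`. Integrating `(eˣ - 1)^p (1 - e^{-xr})` by parts, the boundary terms vanish at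
`0` and at `∞` for `-1 < p < 0`, which turns `r B(r - p, p + 1)` into the Lévy–Khintchine integral
for `p = 1/α - 1`. Integrability of both integrands follows from `eˣ - 1 ≥ x e^{x/2}` and the
Bernoulli-type bound `1 - e^{-xr} ≤ max(r, 1) (1 - e^{-x})`.
-/

open MeasureTheory Real Set

noncomputable def Beta (a b : ℝ) : ℝ := Real.Gamma a * Real.Gamma b / Real.Gamma (a + b)

open Filter Topology

lemma Beta_eq_integral_Ioc {a b : ℝ} (ha : 0 < a) (hb : 0 < b) :
    Beta a b = ∫ u in Ioc 0 1, u ^ (a - 1) * (1 - u) ^ (b - 1) := by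
  rw [show Beta a b = ProbabilityTheory.beta a b from rfl,
    ProbabilityTheory.beta_eq_betaIntegralReal a b ha hb, Complex.betaIntegral,
    intervalIntegral.integral_of_le zero_le_one, ← RCLike.re_to_complex, ← integral_re]
  · refine setIntegral_congr_fun measurableSet_Ioc fun u ⟨hu0, hu1⟩ ↦ ?_
    norm_cast
    rw [← Complex.ofReal_cpow hu0.le, ← Complex.ofReal_cpow (by linarith), RCLike.re_to_complex,
      Complex.re_mul_ofReal, Complex.ofReal_re]
  · exact (intervalIntegrable_iff_integrableOn_Ioc_of_le zero_le_one).1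
      (Complex.betaIntegral_convergent (u := a) (v := b) (by simpa) (by simpa))

lemma integral_Ioc_zero_one_eq_integral_Ioi_exp_neg (f : ℝ → ℝ) :
    ∫ u in Ioc 0 1, f u = ∫ x in Ioi 0, exp (-x) * f (exp (-x)) := by
  rw [← exp_zero, ← image_exp_Iic, integral_image_eq_integral_abs_deriv_smul measurableSet_Iic
    (fun x _ ↦ (hasDerivAt_exp x).hasDerivWithinAt) exp_injective.injOn,
    integral_comp_neg_Ioi 0 (fun x ↦ exp x * f (exp x)), neg_zero]
  simp [abs_of_pos (exp_pos _)]

lemma Beta_eq_integral_exp_neg {a b : ℝ} (ha : 0 < a) (hb : 0 < b) :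
    Beta a b = ∫ x in Ioi 0, exp (-(a * x)) * (1 - exp (-x)) ^ (b - 1) := by
  rw [Beta_eq_integral_Ioc ha hb, integral_Ioc_zero_one_eq_integral_Ioi_exp_neg]
  refine setIntegral_congr_fun measurableSet_Ioi fun x _ ↦ ?_
  rw [← exp_mul, ← mul_assoc, ← exp_add]
  ring_nf

lemma one_sub_exp_neg_nonneg {x : ℝ} (hx : 0 ≤ x) : 0 ≤ 1 - exp (-x) :=
  sub_nonneg.2 (exp_le_one_iff.2 (by linarith))

lemma exp_sub_one_pos {x : ℝ} (hx : 0 < x) : 0 < exp x - 1 :=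
  sub_pos.2 (one_lt_exp_iff.2 hx)

lemma one_sub_exp_neg_mul_nonneg {x r : ℝ} (hx : 0 ≤ x) (hr : 0 ≤ r) : 0 ≤ 1 - exp (-x * r) :=
  sub_nonneg.2 (exp_le_one_iff.2 (by nlinarith))

lemma exp_mul_one_sub_exp_neg (x : ℝ) : exp x * (1 - exp (-x)) = exp x - 1 := by
  rw [mul_sub, ← exp_add, add_neg_cancel, exp_zero, mul_one]

lemma exp_sub_one_rpow {x : ℝ} (hx : 0 ≤ x) (p : ℝ) :
    (exp x - 1) ^ p = exp (p * x) * (1 - exp (-x)) ^ p := by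
  rw [mul_comm p, exp_mul, ← mul_rpow (exp_pos x).le (one_sub_exp_neg_nonneg hx),
    exp_mul_one_sub_exp_neg]

lemma integral_exp_neg_mul_mul_exp_sub_one_rpow {r b : ℝ} (hb : 0 < b) (hbr : b < r + 1) :
    ∫ x in Ioi 0, exp (-x * r) * (exp x - 1) ^ (b - 1) = Beta (r + 1 - b) b := by
  rw [Beta_eq_integral_exp_neg (by linarith) hb]
  refine setIntegral_congr_fun measurableSet_Ioi fun x hx ↦ ?_
  rw [exp_sub_one_rpow (le_of_lt hx), ← mul_assoc, ← exp_add]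
  ring_nf

lemma mul_exp_half_le_exp_sub_one {x : ℝ} (hx : 0 ≤ x) : x * exp (x / 2) ≤ exp x - 1 := by
  have hsinh := (self_le_sinh_iff (x := x / 2)).2 (by linarith)
  rw [sinh_eq] at hsinh
  have hsq : exp x = exp (x / 2) * exp (x / 2) := by rw [← exp_add, add_halves]
  have hinv : exp (x / 2) * exp (-(x / 2)) = 1 := by rw [← exp_add, add_neg_cancel, exp_zero]
  nlinarith [exp_pos (x / 2)]

lemma exp_sub_one_rpow_le {x p : ℝ} (hx : 0 < x) (hp : p ≤ 0) :
    (exp x - 1) ^ p ≤ x ^ p * exp (p / 2 * x) := by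
  calc (exp x - 1) ^ p ≤ (x * exp (x / 2)) ^ p :=
        rpow_le_rpow_of_nonpos (by positivity) (mul_exp_half_le_exp_sub_one hx.le) hp
    _ = x ^ p * exp (p / 2 * x) := by
        rw [mul_rpow hx.le (exp_pos _).le, ← exp_mul]; ring_nf

lemma integrableOn_exp_sub_one_rpow {p : ℝ} (hp1 : -1 < p) (hp0 : p < 0) :
    IntegrableOn (fun x ↦ (exp x - 1) ^ p) (Ioi 0) := by
  refine (integrableOn_rpow_mul_exp_neg_mul_rpow hp1 one_pos (b := -p / 2) (by linarith)).mono'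
    ((measurable_exp.sub_const 1).pow_const p).aestronglyMeasurable ?_
  filter_upwards [ae_restrict_mem measurableSet_Ioi] with x (hx : 0 < x)
  rw [norm_of_nonneg (rpow_nonneg (exp_sub_one_pos hx).le _), rpow_one, neg_div,
    neg_neg]
  exact exp_sub_one_rpow_le hx hp0.le

lemma one_sub_exp_neg_mul_le {x r : ℝ} (hx : 0 ≤ x) :
    1 - exp (-x * r) ≤ max r 1 * (1 - exp (-x)) := by
  rcases le_total r 1 with hr1 | hr1
  · rw [max_eq_right hr1, one_mul]
    have : exp (-x) ≤ exp (-x * r) := exp_le_exp.2 (by nlinarith)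
    linarith
  · rw [max_eq_left hr1]
    have := one_add_mul_self_le_rpow_one_add (s := exp (-x) - 1) (by linarith [exp_pos (-x)]) hr1
    rw [add_sub_cancel, ← exp_mul] at this
    linarith

lemma exp_mul_exp_sub_one_rpow_sub_one_mul_le {x : ℝ} (hx : 0 < x) (p r : ℝ) :
    exp x * (exp x - 1) ^ (p - 1) * (1 - exp (-x * r)) ≤ max r 1 * (exp x - 1) ^ p := by
  have hpos := exp_sub_one_pos hx
  calc exp x * (exp x - 1) ^ (p - 1) * (1 - exp (-x * r))
      ≤ exp x * (exp x - 1) ^ (p - 1) * (max r 1 * (1 - exp (-x))) :=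
        mul_le_mul_of_nonneg_left (one_sub_exp_neg_mul_le hx.le)
          (mul_nonneg (exp_pos x).le (rpow_nonneg hpos.le _))
    _ = max r 1 * ((exp x - 1) ^ (p - 1) * (exp x * (1 - exp (-x)))) := by ring
    _ = max r 1 * (exp x - 1) ^ p := by
        rw [exp_mul_one_sub_exp_neg, ← rpow_add_one hpos.ne', sub_add_cancel]

section

variable {p r : ℝ}

lemma integrableOn_exp_neg_mul_mul_exp_sub_one_rpow (hp1 : -1 < p) (hp0 : p < 0) (hr : 0 ≤ r) :
    IntegrableOn (fun x ↦ exp (-x * r) * (exp x - 1) ^ p) (Ioi 0) := by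
  refine (integrableOn_exp_sub_one_rpow hp1 hp0).mono' (by fun_prop) ?_
  filter_upwards [ae_restrict_mem measurableSet_Ioi] with x (hx : 0 < x)
  have hpow := rpow_nonneg (exp_sub_one_pos hx).le p
  rw [norm_of_nonneg (mul_nonneg (exp_pos _).le hpow)]
  exact mul_le_of_le_one_left hpow (exp_le_one_iff.2 (by nlinarith))

lemma integrableOn_exp_mul_exp_sub_one_rpow_sub_one_mul (hp1 : -1 < p) (hp0 : p < 0)
    (hr : 0 ≤ r) :
    IntegrableOn (fun x ↦ exp x * (exp x - 1) ^ (p - 1) * (1 - exp (-x * r))) (Ioi 0) := by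
  refine ((integrableOn_exp_sub_one_rpow hp1 hp0).const_mul (max r 1)).mono' (by fun_prop) ?_
  filter_upwards [ae_restrict_mem measurableSet_Ioi] with x (hx : 0 < x)
  have hpow := rpow_nonneg (exp_sub_one_pos hx).le (p - 1)
  rw [norm_of_nonneg (mul_nonneg (mul_nonneg (exp_pos _).le hpow)
    (one_sub_exp_neg_mul_nonneg hx.le hr))]
  exact exp_mul_exp_sub_one_rpow_sub_one_mul_le hx p r

lemma hasDerivAt_exp_sub_one_rpow_mul {x : ℝ} (hx : 0 < x) :
    HasDerivAt (fun x ↦ (exp x - 1) ^ p * (1 - exp (-x * r)))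
      (p * (exp x * (exp x - 1) ^ (p - 1) * (1 - exp (-x * r)))
        + r * (exp (-x * r) * (exp x - 1) ^ p)) x := by
  have hpow : HasDerivAt (fun x ↦ (exp x - 1) ^ p) (exp x * p * (exp x - 1) ^ (p - 1)) x :=
    ((hasDerivAt_exp x).sub_const 1).rpow_const (Or.inl (exp_sub_one_pos hx).ne')
  have htail : HasDerivAt (fun x ↦ 1 - exp (-x * r)) (-(exp (-x * r) * (-1 * r))) x :=
    (((hasDerivAt_neg x).mul_const r).exp).const_sub 1
  exact (hpow.mul htail).congr_deriv (by ring)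

lemma tendsto_exp_sub_one_rpow_mul_nhdsGT_zero (hp1 : -1 < p) (hp0 : p < 0) (hr : 0 ≤ r) :
    Tendsto (fun x ↦ (exp x - 1) ^ p * (1 - exp (-x * r))) (𝓝[>] 0) (𝓝 0) := by
  have hbound : Tendsto (fun x : ℝ ↦ r * x ^ (p + 1)) (𝓝[>] 0) (𝓝 0) := by
    have := ((continuous_rpow_const (by linarith : 0 ≤ p + 1)).const_mul r).tendsto 0
    rw [zero_rpow (by linarith), mul_zero] at this
    exact this.mono_left nhdsWithin_le_nhds
  refine tendsto_of_tendsto_of_tendsto_of_le_of_le' tendsto_const_nhds hbound ?_ ?_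
  all_goals filter_upwards [self_mem_nhdsWithin] with x (hx : 0 < x)
  · exact mul_nonneg (rpow_nonneg (exp_sub_one_pos hx).le p)
      (one_sub_exp_neg_mul_nonneg hx.le hr)
  · calc (exp x - 1) ^ p * (1 - exp (-x * r)) ≤ x ^ p * (x * r) := by
          refine mul_le_mul (rpow_le_rpow_of_nonpos hx (by linarith [add_one_le_exp x]) hp0.le)
            ?_ (one_sub_exp_neg_mul_nonneg hx.le hr) (rpow_nonneg hx.le p)
          rw [neg_mul]
          linarith [one_sub_le_exp_neg (x * r)]
      _ = r * x ^ (p + 1) := by rw [rpow_add_one hx.ne']; ring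

lemma tendsto_exp_sub_one_rpow_mul_atTop (hp0 : p < 0) (hr : 0 ≤ r) :
    Tendsto (fun x ↦ (exp x - 1) ^ p * (1 - exp (-x * r))) atTop (𝓝 0) := by
  have hbound : Tendsto (fun x ↦ (exp x - 1) ^ p) atTop (𝓝 0) := by
    simpa only [neg_neg, Function.comp_def, ← sub_eq_add_neg] using
      (tendsto_rpow_neg_atTop (neg_pos.2 hp0)).comp
        (tendsto_atTop_add_const_right _ (-1) tendsto_exp_atTop)
  refine tendsto_of_tendsto_of_tendsto_of_le_of_le' tendsto_const_nhds hbound ?_ ?_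
  all_goals filter_upwards [Ioi_mem_atTop 0] with x (hx : 0 < x)
  · exact mul_nonneg (rpow_nonneg (exp_sub_one_pos hx).le p)
      (one_sub_exp_neg_mul_nonneg hx.le hr)
  · exact mul_le_of_le_one_right (rpow_nonneg (exp_sub_one_pos hx).le p)
      (sub_le_self _ (exp_pos _).le)

lemma neg_mul_integral_exp_mul_exp_sub_one_rpow_sub_one_mul (hp1 : -1 < p) (hp0 : p < 0)
    (hr : 0 ≤ r) :
    -p * ∫ x in Ioi 0, exp x * (exp x - 1) ^ (p - 1) * (1 - exp (-x * r))
      = r * ∫ x in Ioi 0, exp (-x * r) * (exp x - 1) ^ p := by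
  have hA := (integrableOn_exp_mul_exp_sub_one_rpow_sub_one_mul hp1 hp0 hr).const_mul p
  have hB := (integrableOn_exp_neg_mul_mul_exp_sub_one_rpow hp1 hp0 hr).const_mul r
  have hFTC := integral_Ioi_of_hasDerivAt_of_tendsto
    (continuousWithinAt_Ioi_iff_Ici.1 (by simpa [ContinuousWithinAt] using
      tendsto_exp_sub_one_rpow_mul_nhdsGT_zero hp1 hp0 hr))
    (fun x hx ↦ hasDerivAt_exp_sub_one_rpow_mul hx) (hA.add hB)
    (tendsto_exp_sub_one_rpow_mul_atTop hp0 hr)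
  rw [integral_add hA hB, integral_const_mul, integral_const_mul] at hFTC
  simp only [neg_zero, zero_mul, exp_zero, sub_self, mul_zero] at hFTC
  linarith

end

/-- The Lévy–Khintchine form of the Laplace exponent `Φ(r)`:
for every `r ≥ 0`,
`(r/Γ(1+1/α)) B(r+1-1/α, 1/α)
  = ∫₀^∞ ((1-1/α) eˣ / (Γ(1+1/α)(eˣ-1)^{2-1/α})) (1-e^{-xr}) dx`. -/
theorem stmt0 (α : ℝ) (hα : 1 < α ∧ α < 2) (r : ℝ) (hr : 0 ≤ r) :
    (r / Real.Gamma (1 + 1/α)) * Beta (r + 1 - 1/α) (1/α)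
      = ∫ x in Ioi (0:ℝ),
          ((1 - 1/α) * Real.exp x /
            (Real.Gamma (1 + 1/α) * (Real.exp x - 1) ^ (2 - 1/α)))
          * (1 - Real.exp (-x * r)) := by
  have hb0 : 0 < 1 / α := one_div_pos.2 (by linarith)
  have hb1 : 1 / α < 1 := (div_lt_one (by linarith)).2 hα.1
  calc r / Gamma (1 + 1 / α) * Beta (r + 1 - 1 / α) (1 / α)
      = (r * ∫ x in Ioi 0, exp (-x * r) * (exp x - 1) ^ (1 / α - 1)) / Gamma (1 + 1 / α) := by
        rw [integral_exp_neg_mul_mul_exp_sub_one_rpow hb0 (by linarith)]; ring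
    _ = (-(1 / α - 1) * ∫ x in Ioi 0,
          exp x * (exp x - 1) ^ (1 / α - 1 - 1) * (1 - exp (-x * r))) / Gamma (1 + 1 / α) := by
        rw [neg_mul_integral_exp_mul_exp_sub_one_rpow_sub_one_mul (by linarith) (by linarith) hr]
    _ = _ := by
        rw [← integral_const_mul, ← integral_div]
        refine setIntegral_congr_fun measurableSet_Ioi fun x (hx : 0 < x) ↦ ?_
        have hpos := exp_sub_one_pos hx
        rw [show 1 / α - 1 - 1 = -(2 - 1 / α) by ring, rpow_neg hpos.le]
        field_simp
        ring
end

section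
/- For α ∈ (1,2), n ≥ 2, and a partition π_n of [n] = {1,…,n} with k ≥ 2 blocks of sizes n₁,…,n_k, the quantity ρ₋(n)({π_n}) = (D_α Γ(k-α))/(α^k Γ(n-1/α)) · ∏_{i=1}^k [1-1/α]_{n_i-1} satisfies: summing ρ₋(n)({π_n}) over all non-trivial partitions π_n of [n] gives 1. Here [x]_m = Γ(x+m)/Γ(x) and D_α = α²Γ(2-1/α)/Γ(2-α). -/
/-!
Write `w(P) = Γ(k - α) α⁻ᵏ ∏_b [1 - 1/α]_{|b| - 1}` for a partition `P` with `k` parts `b`.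
Every partition of `insert a s` arises uniquely from a partition `P` of `s`, either by adding
the new part `{a}`, which multiplies the weight by `(k - α)/α`, or by adding `a` to a part `b`,
which multiplies it by `|b| - 1/α`. These factors sum to `|s| - 1`, so the total weight of the
partitions of a set of size `m + 1` is `m - 1` times that of size `m`, and it vanishes for every
set of at least two elements. After normalisation by `D_α / Γ(n - 1/α)` the one-part partition
of `[n]` has weight `-1`, so the non-trivial partitions have total weight `1`.
-/

open Real Finset

/-- Rising factorial `[x]_m = Γ(x+m)/Γ(x)`. -/
noncomputable def risingFac (x : ℝ) (m : ℕ) : ℝ := Real.Gamma (x + m) / Real.Gamma x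

theorem risingFac_zero {x : ℝ} (hx : Gamma x ≠ 0) : risingFac x 0 = 1 := by
  simp [risingFac, hx]

theorem risingFac_succ {x : ℝ} {m : ℕ} (h : x + m ≠ 0) :
    risingFac x (m + 1) = (x + m) * risingFac x m := by
  rw [risingFac, risingFac, Nat.cast_succ, ← add_assoc, Gamma_add_one h, mul_div_assoc]

namespace Finpartition

section Lattice

variable {α : Type*} [Lattice α] [OrderBot α] {a : α}

theorem eq_indiscrete_of_card_parts_le_one (P : Finpartition a) (ha : a ≠ ⊥)
    (h : #P.parts ≤ 1) : P = indiscrete ha := by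
  obtain ⟨b, hb⟩ := card_eq_one.1 (le_antisymm h (card_pos.2 (P.parts_nonempty ha)))
  have hba : b = a := by simpa [hb] using P.sup_parts
  ext
  rw [hb, hba, indiscrete_parts]

end Lattice

variable {α : Type*} [DecidableEq α] {s c : Finset α} {a : α}

theorem sum_filter_two_le_card_parts {M : Type*} [AddCommGroup M] (hs : s ≠ ∅)
    (f : Finpartition s → M) :
    ∑ P ∈ univ.filter (fun P : Finpartition s ↦ 2 ≤ #P.parts), f P
      = ∑ P, f P - f (indiscrete hs) := by
  have htrivial : univ.filter (fun P : Finpartition s ↦ ¬ 2 ≤ #P.parts) = {indiscrete hs} := by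
    refine eq_singleton_iff_unique_mem.2 ⟨by simp, fun P hP ↦ ?_⟩
    exact P.eq_indiscrete_of_card_parts_le_one hs (by simpa [Nat.lt_succ_iff] using hP)
  rw [← sum_filter_add_sum_filter_not univ (fun P : Finpartition s ↦ 2 ≤ #P.parts), htrivial,
    sum_singleton, add_sub_cancel_right]

theorem insert_notMem_parts (P : Finpartition s) (ha : a ∉ s) (c : Finset α) :
    insert a c ∉ P.parts :=
  fun h ↦ ha (P.le h (mem_insert_self a c))

/-- `c = ∅` encodes adding `{a}` as a new part. -/
def insertPart (P : Finpartition s) (ha : a ∉ s) (c : Finset α) : Finpartition (insert a s) :=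
  if hc : c ∈ insert ∅ P.parts then
    { parts := insert (insert a c) (P.parts.erase c)
      supIndep := by
        rw [supIndep_iff_pairwiseDisjoint, coe_insert]
        refine (P.disjoint.subset (coe_subset.2 (erase_subset _ _))).insert fun b hb _ ↦ ?_
        obtain ⟨hbc, hb⟩ := mem_erase.1 hb
        refine disjoint_insert_left.2 ⟨fun hab ↦ ha (P.le hb hab), ?_⟩
        rcases mem_insert.1 hc with rfl | hc
        · exact disjoint_empty_left b
        · exact P.disjoint hc hb (Ne.symm hbc)
      sup_parts := by
        simp only [sup_insert, id_eq, sup_eq_union]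
        rcases mem_insert.1 hc with rfl | hc
        · rw [erase_eq_of_notMem P.empty_notMem_parts, ← sup_eq_union, P.sup_parts]
          simp
        · rw [insert_union]
          congr 1
          calc c ∪ (P.parts.erase c).sup id = (insert c (P.parts.erase c)).sup id :=
                (sup_insert (f := id)).symm
            _ = s := by rw [insert_erase hc, P.sup_parts]
      bot_notMem := by
        rw [bot_eq_empty, mem_insert, not_or]
        exact ⟨(insert_ne_empty a c).symm,
          fun h ↦ P.empty_notMem_parts (mem_of_mem_erase h)⟩ }
  else indiscrete (insert_ne_empty a s)

theorem insertPart_parts (P : Finpartition s) (ha : a ∉ s) (hc : c ∈ insert ∅ P.parts) :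
    (P.insertPart ha c).parts = insert (insert a c) (P.parts.erase c) := by
  rw [insertPart, dif_pos hc]

theorem part_insertPart (P : Finpartition s) (ha : a ∉ s) (hc : c ∈ insert ∅ P.parts) :
    (P.insertPart ha c).part a = insert a c :=
  part_eq_of_mem _ (by simp [insertPart_parts P ha hc]) (mem_insert_self a c)

def eraseElem (Q : Finpartition (insert a s)) (ha : a ∉ s) : Finpartition s :=
  (Q.avoid {a}).copy (by rw [sdiff_singleton_eq_erase, erase_insert ha])

theorem eraseElem_parts (Q : Finpartition (insert a s)) (ha : a ∉ s) :
    (Q.eraseElem ha).parts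
      = (insert ((Q.part a).erase a) (Q.parts.erase (Q.part a))).erase ∅ := by
  have hpart : Q.part a ∈ Q.parts := Q.part_mem.2 (mem_insert_self a s)
  have hfix : ∀ t ∈ Q.parts.erase (Q.part a), t \ {a} = t := fun t ht ↦ by
    obtain ⟨hne, ht⟩ := mem_erase.1 ht
    rw [sdiff_singleton_eq_erase, erase_eq_self]
    exact fun hat ↦ hne (Q.part_eq_of_mem ht hat).symm
  simp only [eraseElem, copy_parts, avoid, ofErase_parts, bot_eq_empty]
  conv_lhs => rw [← insert_erase hpart, image_insert, sdiff_singleton_eq_erase,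
    image_congr hfix, image_id']

theorem erase_part_mem_insert_empty_parts (Q : Finpartition (insert a s)) (ha : a ∉ s) :
    (Q.part a).erase a ∈ insert ∅ (Q.eraseElem ha).parts := by
  by_cases h : (Q.part a).erase a = ∅
  · rw [h]
    exact mem_insert_self _ _
  · rw [eraseElem_parts]
    exact mem_insert_of_mem (mem_erase.2 ⟨h, mem_insert_self _ _⟩)

theorem eraseElem_insertPart (P : Finpartition s) (ha : a ∉ s) (hc : c ∈ insert ∅ P.parts) :
    (P.insertPart ha c).eraseElem ha = P := by
  have hac : a ∉ c := by
    rcases mem_insert.1 hc with rfl | hc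
    · exact notMem_empty a
    · exact fun h ↦ ha (P.le hc h)
  ext1
  rw [eraseElem_parts, part_insertPart P ha hc, erase_insert hac, insertPart_parts P ha hc,
    erase_insert fun h ↦ P.insert_notMem_parts ha c (mem_of_mem_erase h)]
  rcases mem_insert.1 hc with rfl | hc
  · rw [erase_eq_of_notMem P.empty_notMem_parts, erase_insert P.empty_notMem_parts]
  · rw [insert_erase hc, erase_eq_of_notMem P.empty_notMem_parts]

theorem insertPart_eraseElem (Q : Finpartition (insert a s)) (ha : a ∉ s) :
    (Q.eraseElem ha).insertPart ha ((Q.part a).erase a) = Q := by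
  have hpart : Q.part a ∈ Q.parts := Q.part_mem.2 (mem_insert_self a s)
  have hrest : ∅ ∉ Q.parts.erase (Q.part a) :=
    fun h ↦ Q.empty_notMem_parts (mem_of_mem_erase h)
  have herase : (Q.part a).erase a ∉ Q.parts.erase (Q.part a) := fun h ↦ by
    obtain ⟨hne, hmem⟩ := mem_erase.1 h
    obtain ⟨b, hb⟩ := Q.nonempty_of_mem_parts hmem
    exact hne (Q.eq_of_mem_parts hmem hpart hb (mem_of_mem_erase hb))
  ext1
  rw [insertPart_parts _ ha (erase_part_mem_insert_empty_parts Q ha),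
    insert_erase (Q.mem_part_self.2 (mem_insert_self a s))]
  conv_rhs => rw [← insert_erase hpart]
  congr 1
  rw [eraseElem_parts]
  by_cases h : (Q.part a).erase a = ∅
  · rw [h, erase_insert hrest, erase_eq_of_notMem hrest]
  · have h' : ∅ ∉ insert ((Q.part a).erase a) (Q.parts.erase (Q.part a)) := by
      simp [Ne.symm h, hrest]
    rw [erase_eq_of_notMem h', erase_insert herase]

theorem sum_eq_sum_insertPart {M : Type*} [AddCommMonoid M] (ha : a ∉ s)
    (f : Finpartition (insert a s) → M) :
    ∑ Q, f Q = ∑ P : Finpartition s, ∑ c ∈ insert ∅ P.parts, f (P.insertPart ha c) := by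
  rw [sum_sigma']
  refine sum_nbij' (fun Q ↦ ⟨Q.eraseElem ha, (Q.part a).erase a⟩)
    (fun p ↦ p.1.insertPart ha p.2) ?_ ?_ ?_ ?_ ?_
  · exact fun Q _ ↦ mem_sigma.2 ⟨mem_univ _, Q.erase_part_mem_insert_empty_parts ha⟩
  · exact fun _ _ ↦ mem_univ _
  · exact fun Q _ ↦ Q.insertPart_eraseElem ha
  · rintro ⟨P, c⟩ hp
    have hc := (mem_sigma.1 hp).2
    refine Sigma.ext (P.eraseElem_insertPart ha hc) (heq_of_eq ?_)
    rw [part_insertPart P ha hc, erase_insert]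
    rcases mem_insert.1 hc with rfl | hc
    · exact notMem_empty a
    · exact fun h ↦ ha (P.le hc h)
  · exact fun Q _ ↦ by rw [Q.insertPart_eraseElem ha]

end Finpartition

section SplitWeight

variable {α : Type*} [DecidableEq α] {s c : Finset α} {a : α} {A : ℝ}

/-- `ρ₋(n)({P})` without the factor `D_α / Γ(n - 1/α)`, which depends only on `n`. -/
noncomputable def splitWeight (A : ℝ) (P : Finpartition s) : ℝ :=
  Gamma (#P.parts - A) / A ^ #P.parts * ∏ b ∈ P.parts, risingFac (1 - 1 / A) (#b - 1)

theorem splitWeight_insertPart_empty (hA : ∀ k : ℕ, A ≠ k)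
    (hx : ∀ m : ℕ, 1 - 1 / A ≠ -m) (P : Finpartition s) (ha : a ∉ s) :
    splitWeight A (P.insertPart ha ∅) = (#P.parts - A) / A * splitWeight A P := by
  have hk : (#P.parts : ℝ) - A ≠ 0 := sub_ne_zero.2 (hA _).symm
  have hA0 : A ≠ 0 := by exact_mod_cast hA 0
  have hnew : insert a ∅ ∉ P.parts := P.insert_notMem_parts ha ∅
  rw [splitWeight, P.insertPart_parts ha (mem_insert_self _ _),
    erase_eq_of_notMem P.empty_notMem_parts, card_insert_of_notMem hnew, prod_insert hnew,
    insert_empty_eq, card_singleton, Nat.sub_self, risingFac_zero (Gamma_ne_zero hx),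
    Nat.cast_succ, add_sub_right_comm, Gamma_add_one hk, splitWeight, pow_succ]
  field_simp

theorem splitWeight_insertPart_of_mem (hx : ∀ m : ℕ, 1 - 1 / A ≠ -m)
    (P : Finpartition s) (ha : a ∉ s) (hc : c ∈ P.parts) :
    splitWeight A (P.insertPart ha c) = (#c - 1 / A) * splitWeight A P := by
  have hnew : insert a c ∉ P.parts.erase c :=
    fun h ↦ P.insert_notMem_parts ha c (mem_of_mem_erase h)
  obtain ⟨m, hm⟩ : ∃ m, #c = m + 1 :=
    Nat.exists_eq_add_one.2 (card_pos.2 (P.nonempty_of_mem_parts hc))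
  have hxm : 1 - 1 / A + m ≠ 0 := fun h ↦ hx m (eq_neg_of_add_eq_zero_left h)
  rw [splitWeight, P.insertPart_parts ha (mem_insert_of_mem hc), card_insert_of_notMem hnew,
    card_erase_add_one hc, prod_insert hnew, card_insert_of_notMem fun h ↦ ha (P.le hc h), hm,
    Nat.add_sub_cancel, risingFac_succ hxm, splitWeight, ← mul_prod_erase _ _ hc, hm,
    Nat.add_sub_cancel]
  push_cast
  ring

theorem sum_splitWeight_insert (hA : ∀ k : ℕ, A ≠ k) (hx : ∀ m : ℕ, 1 - 1 / A ≠ -m)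
    (ha : a ∉ s) :
    ∑ Q : Finpartition (insert a s), splitWeight A Q
      = (#s - 1) * ∑ P : Finpartition s, splitWeight A P := by
  have hA0 : A ≠ 0 := by exact_mod_cast hA 0
  rw [Finpartition.sum_eq_sum_insertPart ha, mul_sum]
  refine sum_congr rfl fun P _ ↦ ?_
  rw [sum_insert P.empty_notMem_parts, splitWeight_insertPart_empty hA hx,
    sum_congr rfl fun c hc ↦ splitWeight_insertPart_of_mem hx P ha hc, ← sum_mul,
    sum_sub_distrib, ← Nat.cast_sum, P.sum_card_parts, sum_const, nsmul_eq_mul]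
  field_simp
  ring

theorem sum_splitWeight_eq_zero (hA : ∀ k : ℕ, A ≠ k) (hx : ∀ m : ℕ, 1 - 1 / A ≠ -m)
    (hs : 1 < #s) : ∑ P : Finpartition s, splitWeight A P = 0 := by
  induction s using Finset.induction_on with
  | empty => simp at hs
  | insert a t ha ih =>
    rw [sum_splitWeight_insert hA hx ha]
    rcases lt_or_ge 1 #t with ht | ht
    · rw [ih ht, mul_zero]
    · have : #t = 1 := by rw [card_insert_of_notMem ha] at hs; omega
      rw [this, Nat.cast_one, sub_self, zero_mul]

end SplitWeight

theorem mul_splitWeight_indiscrete {α : Type*} [DecidableEq α] {s : Finset α} {A : ℝ}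
    (hA : ∀ k : ℕ, A ≠ k) (hx : ∀ m : ℕ, 1 - 1 / A ≠ -m) (hs : s ≠ ∅) :
    A ^ 2 * Gamma (2 - 1 / A) / Gamma (2 - A) / Gamma (#s - 1 / A)
      * splitWeight A (Finpartition.indiscrete hs) = -1 := by
  have hA0 : A ≠ 0 := by exact_mod_cast hA 0
  have hA1 : 1 - A ≠ 0 := sub_ne_zero.2 (by exact_mod_cast (hA 1).symm)
  have hx0 : 1 - 1 / A ≠ 0 := by simpa using hx 0
  have hcard : (1 - 1 / A) + ((#s - 1 : ℕ) : ℝ) = #s - 1 / A := by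
    rw [Nat.cast_sub (card_pos.2 (nonempty_iff_ne_empty.2 hs))]
    ring
  have hGx : Gamma (1 - 1 / A) ≠ 0 := Gamma_ne_zero hx
  have hGA : Gamma (1 - A) ≠ 0 := Gamma_ne_zero fun m h ↦ hA (m + 1) (by push_cast; linarith)
  have hGs : Gamma (#s - 1 / A) ≠ 0 := Gamma_ne_zero fun m h ↦
    hx (m + (#s - 1)) (by rw [Nat.cast_add]; linarith)
  rw [splitWeight, Finpartition.indiscrete_parts, card_singleton, Nat.cast_one, prod_singleton,
    risingFac, hcard, show (2 : ℝ) - 1 / A = 1 - 1 / A + 1 by ring, Gamma_add_one hx0,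
    show (2 : ℝ) - A = 1 - A + 1 by ring, Gamma_add_one hA1]
  generalize Gamma (1 - 1 / A) = Gx at *
  generalize Gamma (1 - A) = GA at *
  generalize Gamma (#s - 1 / A) = Gs at *
  field_simp
  ring

/-- The weights
`ρ₋(n)({π}) = D_α Γ(k-α)/(α^k Γ(n-1/α)) ∏_{i=1}^k [1-1/α]_{n_i-1}`,
where `k` is the number of blocks of the partition `π` of `[n]` and
`n₁,…,n_k` are its block sizes, sum to `1` over the non-trivial partitions
of `[n]`, for `α ∈ (1,2)` and `n ≥ 2`. Here
`D_α = α²Γ(2-1/α)/Γ(2-α)`. -/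
theorem stmt9 (α : ℝ) (hα : 1 < α ∧ α < 2) (n : ℕ) (hn : 2 ≤ n) :
    ∑ P ∈ Finset.univ.filter
        (fun P : Finpartition (Finset.univ : Finset (Fin n)) => 2 ≤ P.parts.card),
      (α ^ 2 * Real.Gamma (2 - 1/α) / Real.Gamma (2 - α))
        * Real.Gamma (P.parts.card - α)
        / (α ^ P.parts.card * Real.Gamma (n - 1/α))
        * ∏ b ∈ P.parts, risingFac (1 - 1/α) (b.card - 1)
      = 1 := by
  obtain ⟨hα1, hα2⟩ := hα
  have hA : ∀ k : ℕ, α ≠ k := fun k hk ↦ by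
    rcases le_or_gt k 1 with h | h
    · have : (k : ℝ) ≤ 1 := by exact_mod_cast h
      linarith
    · have : (2 : ℝ) ≤ k := by exact_mod_cast h
      linarith
  have hx : ∀ m : ℕ, 1 - 1 / α ≠ -m := fun m ↦ by
    have : 1 / α < 1 := (div_lt_one (by linarith)).2 hα1
    have : (0 : ℝ) ≤ m := m.cast_nonneg
    exact ne_of_gt (by linarith)
  have hs : (univ : Finset (Fin n)) ≠ ∅ := (univ_nonempty_iff.2 ⟨⟨0, by omega⟩⟩).ne_empty
  have hcard : #(univ : Finset (Fin n)) = n := card_fin n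
  set D := α ^ 2 * Gamma (2 - 1 / α) / Gamma (2 - α) / Gamma (n - 1 / α)
  have htotal : ∑ P : Finpartition (univ : Finset (Fin n)), D * splitWeight α P = 0 := by
    rw [← mul_sum, sum_splitWeight_eq_zero (s := univ) hA hx (by rw [hcard]; omega), mul_zero]
  have htrivial : D * splitWeight α (Finpartition.indiscrete hs) = -1 := by
    simpa only [hcard] using mul_splitWeight_indiscrete hA hx hs
  calc _ = ∑ P ∈ univ.filter (fun P : Finpartition (univ : Finset (Fin n)) ↦ 2 ≤ #P.parts),
          D * splitWeight α P := sum_congr rfl fun P _ ↦ by rw [splitWeight]; ring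
    _ = 1 := by
      rw [Finpartition.sum_filter_two_le_card_parts hs, htotal, htrivial, sub_neg_eq_add,
        zero_add]
end

section
/- For α ∈ (1,2), the sum over all plane trees T with n leaves and no vertex of out-degree 1 of the product over internal vertices v of |(α-1)(α-2)⋯(α-c_v(T)+1)|/c_v(T)! equals (α-1)(2α-1)⋯((n-1)α-1)/n! = α^{n-1}[1-1/α]_{n-1}/n!, where c_v(T) is the number of children of v. -/
/-!
Let `fₙ = (α - 1)(2α - 1)⋯((n - 1)α - 1) / n!` and `F = ∑ fₙ xⁿ`. The recurrence of the `fₙ` says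
`(1 - α x) F' = 1 - F`, i.e. `F = 1 - (1 - α x) ^ (1 / α)`. Its compositional inverse is
`G(y) = (1 - (1 - y) ^ α) / α = y - ∑_{k ≥ 2} c_k yᵏ`, and for `α ∈ (1, 2)` the `c_k` are exactly
the vertex weights `|(α - 1)⋯(α - k + 1)| / k!`. Hence `F = x + ∑_{k ≥ 2} c_k Fᵏ`, which is also
the equation satisfied by the tree sums after splitting a tree at its root, so both are computed
by the same recursion on the number of leaves. The identity `G(F(x)) = x` is checked
coefficientwise from first-order recurrences, so no real powers are needed.
-/

/-- Finite rooted plane trees. -/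
inductive PTree : Type
  | node : List PTree → PTree

/-- Number of leaves. -/
def PTree.leaves : PTree → ℕ
  | .node cs => max 1 ((cs.attach.map (fun c => PTree.leaves c.1)).sum)
decreasing_by have := List.sizeOf_lt_of_mem c.2; simp; omega

/-- `true` iff no vertex has out-degree 1. -/
def PTree.good : PTree → Bool
  | .node cs => cs.length ≠ 1 && cs.attach.all (fun c => PTree.good c.1)
decreasing_by have := List.sizeOf_lt_of_mem c.2; simp; omega

/-- Weight `∏_v |(α-1)(α-2)⋯(α-c_v+1)|/c_v!` over internal vertices `v`
(the factor of a vertex with `c` children is `(∏_{1≤i≤c-1}|α-i|)/c!`,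
which equals `1` for leaves). -/
noncomputable def PTree.w (α : ℝ) : PTree → ℝ
  | .node cs =>
      (∏ i ∈ Finset.range cs.length \ {0}, |α - (i:ℝ)|) / (Nat.factorial cs.length)
        * ((cs.attach.map (fun d => PTree.w α d.1)).prod)
decreasing_by have := List.sizeOf_lt_of_mem d.2; simp; omega

/-- Root children. -/
def PTree.rootChildren : PTree → List PTree
  | .node cs => cs

open Finset PowerSeries
open scoped ENNReal Nat

/-- At `n = 0` the product formula would give `1`; it is set to `0` so that `F` has no constant
term. -/
noncomputable def stableCoeff (α : ℝ) (n : ℕ) : ℝ :=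
  if n = 0 then 0 else (∏ i ∈ Icc 1 (n - 1), ((i : ℝ) * α - 1)) / n !

noncomputable def stableSeries (α : ℝ) : ℝ⟦X⟧ := PowerSeries.mk (stableCoeff α)

lemma PowerSeries.coeff_X_mul_derivative {R : Type*} [CommSemiring R] (f : R⟦X⟧) (n : ℕ) :
    coeff n (X * d⁄dX R f) = n * coeff n f := by
  rcases n with _ | n
  · simp
  · rw [coeff_succ_X_mul, coeff_derivative, mul_comm]
    push_cast
    rfl

section StableSeries

variable {α : ℝ}

@[simp]
lemma coeff_stableSeries (n : ℕ) : coeff n (stableSeries α) = stableCoeff α n :=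
  coeff_mk _ _

lemma stableCoeff_nonneg (hα : 1 ≤ α) (n : ℕ) : 0 ≤ stableCoeff α n := by
  unfold stableCoeff
  split_ifs
  · rfl
  · refine div_nonneg (prod_nonneg fun i hi => ?_) (Nat.cast_nonneg _)
    have : (1 : ℝ) ≤ i := by exact_mod_cast (mem_Icc.mp hi).1
    nlinarith

lemma succ_mul_stableCoeff_succ (n : ℕ) :
    ((n : ℝ) + 1) * stableCoeff α (n + 1)
      = (α * n - 1) * stableCoeff α n + if n = 0 then 1 else 0 := by
  rcases n with _ | n
  · simp [stableCoeff]
  · simp only [stableCoeff, Nat.add_sub_cancel, Nat.succ_ne_zero, if_false, add_zero]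
    rw [prod_Icc_succ_top (by omega), Nat.factorial_succ (n + 1)]
    generalize ∏ i ∈ Icc 1 n, ((i : ℝ) * α - 1) = P
    push_cast
    field_simp

lemma stableSeries_ode :
    (1 - C α * X) * d⁄dX ℝ (stableSeries α) = 1 - stableSeries α := by
  ext n
  rw [sub_mul, one_mul, map_sub, map_sub, mul_assoc, coeff_C_mul, coeff_derivative, coeff_one]
  rcases n with _ | n
  · simp [stableSeries, stableCoeff]
  · rw [coeff_succ_X_mul, coeff_derivative, coeff_stableSeries, coeff_stableSeries]
    have := succ_mul_stableCoeff_succ (α := α) (n + 1)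
    simp only [Nat.succ_ne_zero, if_false, add_zero] at this ⊢
    push_cast at this ⊢
    linear_combination this

lemma stableSeries_pow_ode (k : ℕ) :
    (1 - C α * X) * d⁄dX ℝ (stableSeries α ^ (k + 1))
      = C ((k : ℝ) + 1) * stableSeries α ^ k * (1 - stableSeries α) := by
  rw [derivative_pow, Nat.add_sub_cancel, ← stableSeries_ode, map_add, map_natCast, map_one]
  push_cast
  ring

lemma succ_mul_coeff_stableSeries_pow_succ (k n : ℕ) :
    ((n : ℝ) + 1) * coeff (n + 1) (stableSeries α ^ (k + 1))
      = (α * n - (k + 1)) * coeff n (stableSeries α ^ (k + 1))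
        + (k + 1) * coeff n (stableSeries α ^ k) := by
  have h := congrArg (coeff n) (stableSeries_pow_ode (α := α) k)
  rw [sub_mul, one_mul, map_sub, mul_assoc, coeff_C_mul, coeff_X_mul_derivative,
    coeff_derivative, mul_assoc, coeff_C_mul, mul_sub, mul_one, map_sub, ← pow_succ] at h
  linear_combination h

lemma X_pow_dvd_stableSeries_pow (k : ℕ) : X ^ k ∣ stableSeries α ^ k :=
  pow_dvd_pow_of_dvd (X_dvd_iff.mpr (by simp [stableSeries, stableCoeff])) k

lemma coeff_stableSeries_pow_of_lt {k n : ℕ} (h : n < k) : coeff n (stableSeries α ^ k) = 0 :=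
  X_pow_dvd_iff.mp (X_pow_dvd_stableSeries_pow k) n h

lemma coeff_stableSeries_pow_nonneg (hα : 1 ≤ α) (k n : ℕ) :
    0 ≤ coeff n (stableSeries α ^ k) := by
  induction k generalizing n with
  | zero => rw [pow_zero, coeff_one]; split_ifs <;> norm_num
  | succ k ih =>
    rw [pow_succ', coeff_mul]
    refine sum_nonneg fun p _ => ?_
    rw [coeff_stableSeries]
    exact mul_nonneg (stableCoeff_nonneg hα _) (ih _)

end StableSeries

section Inverse

variable {α : ℝ}

noncomputable def invCoeff (α : ℝ) (k : ℕ) : ℝ :=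
  if k = 0 then 0 else (∏ i ∈ Ico 1 k, ((i : ℝ) - α)) / k !

lemma invCoeff_zero : invCoeff α 0 = 0 := if_pos rfl

lemma invCoeff_one : invCoeff α 1 = 1 := by simp [invCoeff]

lemma succ_mul_invCoeff_succ (k : ℕ) :
    ((k : ℝ) + 1) * invCoeff α (k + 1) = (k - α) * invCoeff α k + if k = 0 then 1 else 0 := by
  rcases k with _ | k
  · simp [invCoeff]
  · simp only [invCoeff, Nat.succ_ne_zero, if_false, add_zero]
    rw [prod_Ico_succ_top (by omega), Nat.factorial_succ (k + 1)]
    generalize ∏ i ∈ Ico 1 (k + 1), ((i : ℝ) - α) = P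
    push_cast
    field_simp

/-- The `n`-th coefficient of `G ∘ F`, where `G(y) = ∑ₖ invCoeff α k yᵏ = (1 - (1 - y) ^ α) / α`
and `F = stableSeries α`. -/
noncomputable def invCompCoeff (α : ℝ) (n : ℕ) : ℝ :=
  ∑ k ∈ range (n + 1), invCoeff α k * coeff n (stableSeries α ^ k)

/-- The coefficientwise form of `(1 - α x) E' + α E = 1` for `E = G ∘ F`: after inserting the
recurrences of `invCoeff` and of the coefficients of `F ^ k`, the sum telescopes. -/
lemma succ_mul_invCompCoeff_succ (n : ℕ) :
    ((n : ℝ) + 1) * invCompCoeff α (n + 1)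
      = α * (n - 1) * invCompCoeff α n + if n = 0 then 1 else 0 := by
  set W := fun k : ℕ => coeff n (stableSeries α ^ k)
  set a := fun k : ℕ => invCoeff α k * W k
  set b := fun k : ℕ => (k : ℝ) * a k
  have ha := sum_range_sub a (n + 1)
  have hb := sum_range_sub b (n + 1)
  have hW : W (n + 1) = 0 := coeff_stableSeries_pow_of_lt (Nat.lt_succ_self n)
  have hδ : ∑ k ∈ range (n + 1), (if k = 0 then 1 else 0) * W k = if n = 0 then 1 else 0 := by
    simp [W, coeff_one]
  have hterm : ∀ k ∈ range (n + 1),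
      ((n : ℝ) + 1) * (invCoeff α (k + 1) * coeff (n + 1) (stableSeries α ^ (k + 1)))
        = α * n * (a (k + 1) - a k) - (b (k + 1) - b k) + α * (n - 1) * a k
          + (if k = 0 then 1 else 0) * W k := by
    intro k _
    simp only [a, b, W]
    push_cast
    linear_combination invCoeff α (k + 1) * succ_mul_coeff_stableSeries_pow_succ (α := α) k n
      + W k * succ_mul_invCoeff_succ (α := α) k
  rw [invCompCoeff, sum_range_succ', invCoeff_zero, zero_mul, add_zero, mul_sum,
    sum_congr rfl hterm, sum_add_distrib, sum_add_distrib, sum_sub_distrib, ← mul_sum, ← mul_sum,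
    ha, hb, hδ]
  simp only [a, b, hW, invCoeff_zero]
  simp [invCompCoeff, W]

lemma invCompCoeff_eq_coeff_X (n : ℕ) : invCompCoeff α n = coeff n (X : ℝ⟦X⟧) := by
  rw [coeff_X]
  induction n with
  | zero => simp [invCompCoeff, invCoeff_zero]
  | succ n ih =>
    have h := succ_mul_invCompCoeff_succ (α := α) n
    rw [ih] at h
    rcases n with _ | _ | n
    · simpa using h
    · simpa using h
    · simp at h
      exact h.resolve_left (by positivity)

end Inverse

section VertexWeight

variable {α : ℝ}

noncomputable def vertexWeight (α : ℝ) (k : ℕ) : ℝ :=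
  (∏ i ∈ range k \ {0}, |α - (i : ℝ)|) / k !

lemma vertexWeight_nonneg (α : ℝ) (k : ℕ) : 0 ≤ vertexWeight α k :=
  div_nonneg (prod_nonneg fun _ _ => abs_nonneg _) (Nat.cast_nonneg _)

lemma invCoeff_eq_neg_vertexWeight (hα₁ : 1 ≤ α) (hα₂ : α ≤ 2) {k : ℕ} (hk : 2 ≤ k) :
    invCoeff α k = -vertexWeight α k := by
  have hIco : range k \ {0} = Ico 1 k := by
    ext i
    simp only [mem_sdiff, mem_range, mem_singleton, mem_Ico]
    omega
  have hneg : ∏ i ∈ Ico 1 k, ((i : ℝ) - α) ≤ 0 := by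
    rw [prod_eq_prod_Ico_succ_bot (by omega)]
    refine mul_nonpos_of_nonpos_of_nonneg (by push_cast; linarith) (prod_nonneg fun i hi => ?_)
    have : (2 : ℝ) ≤ i := by exact_mod_cast (mem_Ico.mp hi).1
    linarith
  rw [invCoeff, if_neg (by omega), vertexWeight, hIco]
  simp_rw [abs_sub_comm α]
  rw [← abs_prod, abs_of_nonpos hneg, neg_div, neg_neg]

lemma stableCoeff_eq_sum_vertexWeight (hα₁ : 1 ≤ α) (hα₂ : α ≤ 2) {n : ℕ} (hn : 2 ≤ n) :
    stableCoeff α n = ∑ k ∈ Ico 2 (n + 1), vertexWeight α k * coeff n (stableSeries α ^ k) := by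
  have h := invCompCoeff_eq_coeff_X (α := α) n
  rw [coeff_X, if_neg (by omega), invCompCoeff, range_eq_Ico, sum_eq_sum_Ico_succ_bot (by omega),
    sum_eq_sum_Ico_succ_bot (by omega)] at h
  have hsum : ∑ k ∈ Ico 2 (n + 1), invCoeff α k * coeff n (stableSeries α ^ k)
      = -∑ k ∈ Ico 2 (n + 1), vertexWeight α k * coeff n (stableSeries α ^ k) := by
    rw [← sum_neg_distrib]
    refine sum_congr rfl fun k hk => ?_
    rw [invCoeff_eq_neg_vertexWeight hα₁ hα₂ (mem_Ico.mp hk).1, neg_mul]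
  rw [hsum, pow_one, coeff_stableSeries, zero_add, invCoeff_zero, invCoeff_one] at h
  linarith

end VertexWeight

lemma Real.Gamma_add_nat_div_Gamma_eq_prod {s : ℝ} (hs : 0 < s) (m : ℕ) :
    Real.Gamma (s + m) / Real.Gamma s = ∏ i ∈ range m, (s + i) := by
  induction m with
  | zero => simp [(Real.Gamma_pos_of_pos hs).ne']
  | succ m ih =>
    rw [prod_range_succ, ← ih, Nat.cast_succ, ← add_assoc, Real.Gamma_add_one (by positivity)]
    ring

lemma prod_Icc_natCast_mul_sub_one {α : ℝ} (hα : α ≠ 0) (m : ℕ) :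
    ∏ i ∈ Icc 1 m, ((i : ℝ) * α - 1) = α ^ m * ∏ i ∈ range m, ((1 - 1 / α) + i) := by
  induction m with
  | zero => simp
  | succ m ih =>
    rw [prod_Icc_succ_top (by omega), ih, prod_range_succ, pow_succ]
    push_cast
    field_simp
    ring

namespace PTree

lemma leaves_node (cs : List PTree) : (node cs).leaves = max 1 (cs.map leaves).sum := by
  rw [leaves]
  simp

lemma good_node (cs : List PTree) :
    (node cs).good = true ↔ cs.length ≠ 1 ∧ ∀ t ∈ cs, t.good = true := by
  rw [good]
  simp

lemma w_node (α : ℝ) (cs : List PTree) :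
    (node cs).w α = vertexWeight α cs.length * (cs.map (w α)).prod := by
  rw [w, vertexWeight]
  simp

lemma one_le_leaves (T : PTree) : 1 ≤ T.leaves := by
  cases T
  rw [leaves_node]
  exact le_max_left _ _

lemma length_le_sum_leaves (cs : List PTree) : cs.length ≤ (cs.map leaves).sum := by
  simpa using List.length_le_sum_of_one_le (cs.map leaves) (by simp [one_le_leaves])

lemma w_nonneg (α : ℝ) (T : PTree) : 0 ≤ T.w α := by
  induction T using w.induct with
  | _ cs ih =>
    rw [w_node]
    exact mul_nonneg (vertexWeight_nonneg α _)
      (List.prod_nonneg (by simpa using fun d hd => ih ⟨d, hd⟩))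

def equivList : PTree ≃ List PTree where
  toFun := rootChildren
  invFun := node
  left_inv T := by cases T; rfl
  right_inv _ := rfl

end PTree

section Mass

open PTree

variable {α : ℝ}

/-- Masses are taken in `ℝ≥0∞`, where every `tsum` converges. -/
noncomputable def treeMass (α : ℝ) (n : ℕ) (T : PTree) : ℝ≥0∞ :=
  if T.leaves = n ∧ T.good then ENNReal.ofReal (T.w α) else 0

noncomputable def treeSum (α : ℝ) (n : ℕ) : ℝ≥0∞ := ∑' T, treeMass α n T

noncomputable def forestMass (α : ℝ) (k n : ℕ) (cs : List PTree) : ℝ≥0∞ :=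
  if cs.length = k ∧ (cs.map leaves).sum = n ∧ ∀ t ∈ cs, t.good
  then ENNReal.ofReal (cs.map (w α)).prod else 0

noncomputable def forestSum (α : ℝ) (k n : ℕ) : ℝ≥0∞ := ∑' cs, forestMass α k n cs

lemma treeSum_zero : treeSum α 0 = 0 :=
  ENNReal.tsum_eq_zero.mpr fun T => if_neg fun h => by have := T.one_le_leaves; omega

lemma treeSum_one : treeSum α 1 = 1 := by
  rw [treeSum, tsum_eq_single (node [])]
  · simp [treeMass, leaves_node, good_node, w_node, vertexWeight]
  · rintro ⟨cs⟩ hcs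
    refine if_neg fun ⟨hleaves, hgood⟩ => hcs ?_
    rw [leaves_node] at hleaves
    rw [good_node] at hgood
    have := length_le_sum_leaves cs
    rw [List.length_eq_zero_iff.mp (by omega : cs.length = 0)]

lemma forestSum_zero (n : ℕ) : forestSum α 0 n = if n = 0 then 1 else 0 := by
  rw [forestSum, tsum_eq_single []]
  · simp [forestMass, @eq_comm ℕ 0]
  · intro cs hcs
    exact if_neg fun h => hcs (List.length_eq_zero_iff.mp h.1)

lemma forestMass_cons (k n : ℕ) (T : PTree) (cs : List PTree) :
    forestMass α (k + 1) n (T :: cs)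
      = ∑ p ∈ antidiagonal n, treeMass α p.1 T * forestMass α k p.2 cs := by
  rw [Nat.sum_antidiagonal_eq_sum_range_succ_mk]
  simp only [treeMass, forestMass, ite_and, ite_mul, zero_mul]
  rw [sum_ite_eq]
  simp only [List.length_cons, List.map_cons, List.sum_cons, List.forall_mem_cons, List.prod_cons,
    add_left_inj, mem_range, ENNReal.ofReal_mul (w_nonneg α T)]
  split_ifs <;> simp_all <;> omega

lemma forestSum_succ (k n : ℕ) :
    forestSum α (k + 1) n = ∑ p ∈ antidiagonal n, treeSum α p.1 * forestSum α k p.2 := by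
  have hcons : Function.Injective (fun p : PTree × List PTree => p.1 :: p.2) :=
    fun _ _ h => Prod.ext (List.cons.inj h).1 (List.cons.inj h).2
  have hsupp : Function.support (forestMass α (k + 1) n)
      ⊆ Set.range (fun p : PTree × List PTree => p.1 :: p.2) := by
    rintro (_ | ⟨T, cs⟩) h
    · exact absurd (if_neg (by simp)) h
    · exact ⟨(T, cs), rfl⟩
  rw [forestSum, ← hcons.tsum_eq hsupp]
  simp only [forestMass_cons]
  rw [Summable.tsum_finsetSum fun _ _ => ENNReal.summable]
  refine sum_congr rfl fun p _ => ?_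
  rw [ENNReal.tsum_prod (f := fun T cs => treeMass α p.1 T * forestMass α k p.2 cs), treeSum,
    forestSum, ← ENNReal.tsum_mul_right]
  exact tsum_congr fun T => ENNReal.tsum_mul_left

lemma forestSum_succ_zero (k : ℕ) : forestSum α (k + 1) 0 = 0 := by
  simp [forestSum_succ, treeSum_zero]

lemma treeMass_node {n : ℕ} (hn : 2 ≤ n) (cs : List PTree) :
    treeMass α n (node cs)
      = ∑ k ∈ Ico 2 (n + 1), ENNReal.ofReal (vertexWeight α k) * forestMass α k n cs := by
  simp only [forestMass, ite_and, mul_ite, mul_zero]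
  rw [sum_ite_eq]
  have hmax : max 1 (cs.map leaves).sum = n ↔ (cs.map leaves).sum = n := by
    rw [max_def]
    split_ifs <;> omega
  have hlen := length_le_sum_leaves cs
  have hnil : cs.length = 0 → (cs.map leaves).sum = 0 := fun h => by
    simp [List.length_eq_zero_iff.mp h]
  simp only [treeMass, leaves_node, good_node, w_node, hmax, mem_Ico, ite_and,
    ENNReal.ofReal_mul (vertexWeight_nonneg α _)]
  split_ifs <;> first | rfl | omega

lemma treeSum_eq_sum_forestSum {n : ℕ} (hn : 2 ≤ n) :
    treeSum α n = ∑ k ∈ Ico 2 (n + 1), ENNReal.ofReal (vertexWeight α k) * forestSum α k n := by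
  rw [treeSum, ← PTree.equivList.symm.tsum_eq]
  simp only [forestSum, ← ENNReal.tsum_mul_left]
  rw [← Summable.tsum_finsetSum fun _ _ => ENNReal.summable]
  exact tsum_congr fun cs => treeMass_node hn cs

end Mass

section Transfer

variable {α : ℝ}

lemma ofReal_coeff_stableSeries_pow_succ (hα : 1 ≤ α) (k n : ℕ) :
    ENNReal.ofReal (coeff n (stableSeries α ^ (k + 1)))
      = ∑ p ∈ antidiagonal n, ENNReal.ofReal (stableCoeff α p.1)
          * ENNReal.ofReal (coeff p.2 (stableSeries α ^ k)) := by
  rw [pow_succ', coeff_mul, ENNReal.ofReal_sum_of_nonneg fun p _ =>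
    mul_nonneg (by simpa using stableCoeff_nonneg hα _) (coeff_stableSeries_pow_nonneg hα _ _)]
  simp_rw [coeff_stableSeries, ENNReal.ofReal_mul (stableCoeff_nonneg hα _)]

lemma forestSum_eq_of_lt (hα : 1 ≤ α) {N : ℕ}
    (h : ∀ m < N, treeSum α m = ENNReal.ofReal (stableCoeff α m)) (k : ℕ) {m : ℕ} (hm : m < N) :
    forestSum α k m = ENNReal.ofReal (coeff m (stableSeries α ^ k)) := by
  induction k generalizing m with
  | zero => rw [forestSum_zero, pow_zero, coeff_one]; split_ifs <;> simp
  | succ k ih =>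
    rw [forestSum_succ, ofReal_coeff_stableSeries_pow_succ hα]
    refine sum_congr rfl fun p hp => ?_
    have hp' := mem_antidiagonal.mp hp
    rw [h p.1 (by omega), ih (by omega)]

lemma forestSum_add_two (hα : 1 ≤ α) {n : ℕ}
    (h : ∀ m < n, treeSum α m = ENNReal.ofReal (stableCoeff α m)) (k : ℕ) :
    forestSum α (k + 2) n = ENNReal.ofReal (coeff n (stableSeries α ^ (k + 2))) := by
  rw [forestSum_succ, ofReal_coeff_stableSeries_pow_succ hα]
  refine sum_congr rfl fun p hp => ?_
  have hp' := mem_antidiagonal.mp hp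
  rcases Nat.eq_zero_or_pos p.1 with h₁ | h₁
  · rw [h₁, treeSum_zero, stableCoeff, if_pos rfl, ENNReal.ofReal_zero, zero_mul, zero_mul]
  rcases Nat.eq_zero_or_pos p.2 with h₂ | h₂
  · rw [h₂, forestSum_succ_zero, coeff_stableSeries_pow_of_lt (by omega), ENNReal.ofReal_zero,
      mul_zero, mul_zero]
  rw [h p.1 (by omega), forestSum_eq_of_lt hα h (k + 1) (by omega)]

lemma treeSum_eq_stableCoeff (hα₁ : 1 ≤ α) (hα₂ : α ≤ 2) (n : ℕ) :
    treeSum α n = ENNReal.ofReal (stableCoeff α n) := by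
  induction n using Nat.strong_induction_on with
  | _ n ih =>
    rcases lt_or_ge n 2 with hn | hn
    · interval_cases n
      · simp [treeSum_zero, stableCoeff]
      · simp [treeSum_one, stableCoeff]
    rw [treeSum_eq_sum_forestSum hn, stableCoeff_eq_sum_vertexWeight hα₁ hα₂ hn,
      ENNReal.ofReal_sum_of_nonneg fun k _ =>
        mul_nonneg (vertexWeight_nonneg α k) (coeff_stableSeries_pow_nonneg hα₁ k n)]
    refine sum_congr rfl fun k hk => ?_
    obtain ⟨j, rfl⟩ : ∃ j, k = j + 2 := ⟨k - 2, by have := (mem_Ico.mp hk).1; omega⟩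
    rw [forestSum_add_two hα₁ ih, ENNReal.ofReal_mul (vertexWeight_nonneg α _)]

lemma tsum_w_eq_toReal_treeSum (α : ℝ) (n : ℕ) :
    ∑' T : {T : PTree // T.leaves = n ∧ T.good}, T.1.w α = (treeSum α n).toReal := by
  have h : treeSum α n = ∑' T : {T : PTree // T.leaves = n ∧ T.good}, ENNReal.ofReal (T.1.w α) :=
    (tsum_congr fun T => by simp [Set.indicator_apply, treeMass]).trans
      (_root_.tsum_subtype {T : PTree | T.leaves = n ∧ T.good} fun T => ENNReal.ofReal (T.w α)).symm
  rw [h, ENNReal.tsum_toReal_eq fun _ => ENNReal.ofReal_ne_top]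
  exact tsum_congr fun T => (ENNReal.toReal_ofReal (T.1.w_nonneg α)).symm

end Transfer

/-- For `α ∈ (1,2)`, the sum over all plane trees `T` with `n` leaves and no
vertex of out-degree `1` of `∏_v |(α-1)(α-2)⋯(α-c_v(T)+1)|/c_v(T)!` equals
`(α-1)(2α-1)⋯((n-1)α-1)/n! = α^{n-1}[1-1/α]_{n-1}/n!`. -/
theorem stmt12 (α : ℝ) (hα : 1 < α ∧ α < 2) (n : ℕ) (hn : 1 ≤ n) :
    (∑' T : {T : PTree // T.leaves = n ∧ T.good}, PTree.w α T.1
        = (∏ i ∈ Finset.Icc 1 (n - 1), ((i:ℝ) * α - 1)) / (Nat.factorial n))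
    ∧ (∏ i ∈ Finset.Icc 1 (n - 1), ((i:ℝ) * α - 1)) / (Nat.factorial n)
        = α ^ (n - 1) * (Real.Gamma ((1 - 1/α) + (n - 1)) / Real.Gamma (1 - 1/α))
            / (Nat.factorial n) := by
  obtain ⟨hα₁, hα₂⟩ := hα
  have hcoeff : stableCoeff α n = (∏ i ∈ Icc 1 (n - 1), ((i : ℝ) * α - 1)) / n ! :=
    if_neg (by omega)
  refine ⟨?_, ?_⟩
  · rw [tsum_w_eq_toReal_treeSum, treeSum_eq_stableCoeff hα₁.le hα₂.le,
      ENNReal.toReal_ofReal (stableCoeff_nonneg hα₁.le n), hcoeff]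
  · have hs : 0 < 1 - 1 / α := by
      rw [sub_pos, div_lt_one (by linarith)]
      exact hα₁
    rw [prod_Icc_natCast_mul_sub_one (by positivity) (n - 1),
      ← Real.Gamma_add_nat_div_Gamma_eq_prod hs, Nat.cast_sub hn, Nat.cast_one]
end

section
/- For α ∈ (1,2) and r > 0, ∫₀^1 y^{-1/α}(1-y^r)(1-y)^{1/α - 2} dy = (r·Γ(1+1/α)/(1-1/α)) · B(r+1-1/α, 1/α)/Γ(1+1/α) = r·B(r+1-1/α,1/α)/(1-1/α). -/
open MeasureTheory Real Set

/-!
Put `s = 1/α ∈ (0,1)`. Up to the factor `1 - s`, the weight `y^{-s}(1-y)^{s-2}` is the derivative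
of `y^{1-s}(1-y)^{s-1}`. Integrating by parts against `1 - y^r`, the boundary terms vanish (at
`y = 1` because `1 - y^r = O(1-y)`), and what remains is
`r/(1-s) ∫₀¹ y^{r-s}(1-y)^{s-1} dy = r B(r+1-s, s)/(1-s)`.
-/

open Filter Topology

section BetaIntegral

variable {a b : ℝ}

lemma cpow_mul_one_sub_cpow_ofReal {x : ℝ} (hx : x ∈ Icc (0 : ℝ) 1) :
    (x : ℂ) ^ ((a : ℂ) - 1) * (1 - (x : ℂ)) ^ ((b : ℂ) - 1)
      = ((x ^ (a - 1) * (1 - x) ^ (b - 1) : ℝ) : ℂ) := by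
  rw [Complex.ofReal_mul, Complex.ofReal_cpow hx.1, Complex.ofReal_cpow (sub_nonneg.2 hx.2)]
  push_cast
  ring_nf

lemma betaIntegral_ofReal :
    Complex.betaIntegral a b = ((∫ x in (0 : ℝ)..1, x ^ (a - 1) * (1 - x) ^ (b - 1) : ℝ) : ℂ) := by
  rw [Complex.betaIntegral, ← intervalIntegral.integral_ofReal]
  refine intervalIntegral.integral_congr fun x hx ↦ cpow_mul_one_sub_cpow_ofReal ?_
  rwa [uIcc_of_le zero_le_one] at hx

lemma intervalIntegrable_rpow_mul_one_sub_rpow (ha : 0 < a) (hb : 0 < b) :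
    IntervalIntegrable (fun x : ℝ ↦ x ^ (a - 1) * (1 - x) ^ (b - 1)) volume 0 1 := by
  have h := Complex.betaIntegral_convergent (u := a) (v := b) (by simpa) (by simpa)
  rw [intervalIntegrable_iff_integrableOn_Icc_of_le zero_le_one] at h ⊢
  simpa [IntegrableOn] using
    (h.congr_fun (fun x hx ↦ cpow_mul_one_sub_cpow_ofReal hx) measurableSet_Icc).re

lemma integral_rpow_mul_one_sub_rpow (ha : 0 < a) (hb : 0 < b) :
    ∫ x in (0 : ℝ)..1, x ^ (a - 1) * (1 - x) ^ (b - 1) = Beta a b := by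
  have h := Complex.betaIntegral_eq_Gamma_mul_div a b (by simpa) (by simpa)
  rw [betaIntegral_ofReal, ← Complex.ofReal_add, Complex.Gamma_ofReal, Complex.Gamma_ofReal,
    Complex.Gamma_ofReal] at h
  exact_mod_cast h

end BetaIntegral

lemma one_sub_rpow_le_max_mul (r : ℝ) {y : ℝ} (hy0 : 0 < y) (hy1 : y ≤ 1) :
    1 - y ^ r ≤ max r 1 * (1 - y) := by
  rcases le_total r 1 with h | h
  · have : y ≤ y ^ r := by simpa using rpow_le_rpow_of_exponent_ge hy0 hy1 h
    nlinarith [le_max_right r 1]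
  · have : 1 + r * (y - 1) ≤ y ^ r := by
      simpa using one_add_mul_self_le_rpow_one_add (s := y - 1) (by linarith) h
    nlinarith [le_max_left r 1]

section IntegrationByParts

variable {r s : ℝ}

lemma intervalIntegrable_rpow_neg_mul_one_sub_rpow_mul (hs0 : 0 < s) (hs1 : s < 1)
    (hr : 0 ≤ r) :
    IntervalIntegrable (fun y : ℝ ↦ y ^ (-s) * (1 - y ^ r) * (1 - y) ^ (s - 2)) volume 0 1 := by
  have hdom := (intervalIntegrable_rpow_mul_one_sub_rpow (a := 1 - s) (b := s) (by linarith) hs0)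
    |>.const_mul (max r 1)
  rw [intervalIntegrable_iff_integrableOn_Ioo_of_le zero_le_one] at hdom ⊢
  refine hdom.mono' (by fun_prop) (ae_restrict_of_forall_mem measurableSet_Ioo ?_)
  rintro y ⟨hy0, hy1⟩
  have hyr : y ^ r ≤ 1 := rpow_le_one hy0.le hy1.le hr
  have hp : 0 ≤ y ^ (-s) := rpow_nonneg hy0.le _
  have hq : 0 ≤ (1 - y) ^ (s - 2) := rpow_nonneg (by linarith) _
  rw [norm_of_nonneg (by positivity), sub_sub_cancel_left,
    show s - 1 = s - 2 + 1 by ring, rpow_add_one (by linarith)]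
  calc y ^ (-s) * (1 - y ^ r) * (1 - y) ^ (s - 2)
      ≤ y ^ (-s) * (max r 1 * (1 - y)) * (1 - y) ^ (s - 2) := by
        gcongr
        exact one_sub_rpow_le_max_mul r hy0 hy1.le
    _ = max r 1 * (y ^ (-s) * ((1 - y) ^ (s - 2) * (1 - y))) := by ring

lemma hasDerivAt_rpow_mul_one_sub_rpow_mul {x : ℝ} (hx : x ∈ Ioo (0 : ℝ) 1) :
    HasDerivAt (fun y : ℝ ↦ y ^ (1 - s) * (1 - y ^ r) * (1 - y) ^ (s - 1))
      ((1 - s) * (x ^ (-s) * (1 - x ^ r) * (1 - x) ^ (s - 2))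
        - r * (x ^ (r + 1 - s - 1) * (1 - x) ^ (s - 1))) x := by
  obtain ⟨hx0, hx1⟩ := hx
  have hx1' : 1 - x ≠ 0 := by linarith
  refine ((((hasDerivAt_id' x).rpow_const (p := 1 - s) (Or.inl hx0.ne')).mul
    (((hasDerivAt_id' x).rpow_const (p := r) (Or.inl hx0.ne')).const_sub 1)).mul
    (((hasDerivAt_id' x).const_sub 1).rpow_const (p := s - 1) (Or.inl hx1'))).congr_deriv ?_
  simp only [Pi.mul_apply]
  rw [show r + 1 - s - 1 = r + -s by ring, show 1 - s - 1 = -s by ring,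
    show s - 1 - 1 = s - 2 by ring, rpow_add hx0, rpow_sub_one hx0.ne',
    show 1 - s = -s + 1 by ring, rpow_add_one hx0.ne',
    show s - 1 = s - 2 + 1 by ring, rpow_add_one hx1']
  field_simp
  ring

lemma tendsto_rpow_mul_one_sub_rpow_mul_nhdsGT_zero (hs1 : s < 1) (hr : 0 ≤ r) :
    Tendsto (fun y : ℝ ↦ y ^ (1 - s) * (1 - y ^ r) * (1 - y) ^ (s - 1)) (𝓝[>] 0) (𝓝 0) := by
  have h : ContinuousAt (fun y : ℝ ↦ y ^ (1 - s) * (1 - y ^ r) * (1 - y) ^ (s - 1)) 0 :=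
    ((continuousAt_rpow_const _ _ (Or.inr (by linarith))).mul
      (continuousAt_const.sub (continuousAt_rpow_const _ _ (Or.inr hr)))).mul
      ((continuousAt_const.sub continuousAt_id).rpow_const (Or.inl (by norm_num)))
  simpa [zero_rpow (show 1 - s ≠ 0 by linarith)] using h.tendsto.mono_left nhdsWithin_le_nhds

lemma tendsto_rpow_mul_one_sub_rpow_mul_nhdsLT_one (hs0 : 0 < s) (hr : 0 ≤ r) :
    Tendsto (fun y : ℝ ↦ y ^ (1 - s) * (1 - y ^ r) * (1 - y) ^ (s - 1)) (𝓝[<] 1) (𝓝 0) := by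
  have hpow : Tendsto (fun y : ℝ ↦ y ^ (1 - s)) (𝓝[<] 1) (𝓝 1) := by
    simpa using ((continuousAt_rpow_const 1 (1 - s) (Or.inl one_ne_zero)).tendsto).mono_left
      nhdsWithin_le_nhds
  have hvanish : Tendsto (fun y : ℝ ↦ max r 1 * (1 - y) ^ s) (𝓝[<] 1) (𝓝 0) := by
    have h : ContinuousAt (fun y : ℝ ↦ max r 1 * (1 - y) ^ s) 1 :=
      continuousAt_const.mul ((continuousAt_const.sub continuousAt_id).rpow_const
        (Or.inr hs0.le))
    simpa [zero_rpow hs0.ne'] using h.tendsto.mono_left nhdsWithin_le_nhds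
  have hsqueeze : Tendsto (fun y : ℝ ↦ (1 - y ^ r) * (1 - y) ^ (s - 1)) (𝓝[<] 1) (𝓝 0) := by
    refine squeeze_zero' ?_ ?_ hvanish <;>
      filter_upwards [Ioo_mem_nhdsLT zero_lt_one] with y ⟨hy0, hy1⟩
    · have hyr : y ^ r ≤ 1 := rpow_le_one hy0.le hy1.le hr
      have hq : 0 ≤ (1 - y) ^ (s - 1) := rpow_nonneg (sub_nonneg.2 hy1.le) _
      positivity
    · have hy1' : 1 - y ≠ 0 := by linarith
      calc (1 - y ^ r) * (1 - y) ^ (s - 1) ≤ max r 1 * (1 - y) * (1 - y) ^ (s - 1) := by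
            gcongr
            exact one_sub_rpow_le_max_mul r hy0 hy1.le
        _ = max r 1 * (1 - y) ^ s := by
            conv_rhs => rw [← sub_add_cancel s 1, rpow_add_one hy1']
            ring
  simpa [mul_assoc] using hpow.mul hsqueeze

end IntegrationByParts

theorem integral_rpow_neg_mul_one_sub_rpow_mul {r s : ℝ} (hs0 : 0 < s) (hs1 : s < 1)
    (hr : 0 ≤ r) :
    ∫ y in Ioo (0 : ℝ) 1, y ^ (-s) * (1 - y ^ r) * (1 - y) ^ (s - 2)
      = r * Beta (r + 1 - s) s / (1 - s) := by
  have hf := intervalIntegrable_rpow_neg_mul_one_sub_rpow_mul hs0 hs1 hr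
  have hg := intervalIntegrable_rpow_mul_one_sub_rpow (a := r + 1 - s) (b := s) (by linarith) hs0
  have hibp := intervalIntegral.integral_eq_sub_of_hasDerivAt_of_tendsto zero_lt_one
    (fun x hx ↦ hasDerivAt_rpow_mul_one_sub_rpow_mul hx)
    ((hf.const_mul (1 - s)).sub (hg.const_mul r))
    (tendsto_rpow_mul_one_sub_rpow_mul_nhdsGT_zero hs1 hr)
    (tendsto_rpow_mul_one_sub_rpow_mul_nhdsLT_one hs0 hr)
  rw [intervalIntegral.integral_sub (hf.const_mul _) (hg.const_mul _),
    intervalIntegral.integral_const_mul, intervalIntegral.integral_const_mul,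
    integral_rpow_mul_one_sub_rpow (by linarith) hs0, sub_zero, sub_eq_zero,
    intervalIntegral.integral_of_le zero_le_one, integral_Ioc_eq_integral_Ioo] at hibp
  rw [eq_div_iff (by linarith), mul_comm, hibp]

/-- For `α ∈ (1,2)` and `r > 0`,
`∫₀^1 y^{-1/α}(1-y^r)(1-y)^{1/α-2} dy = r B(r+1-1/α, 1/α)/(1-1/α)`. -/
theorem stmt15 (α : ℝ) (hα : 1 < α ∧ α < 2) (r : ℝ) (hr : 0 < r) :
    ∫ y in Ioo (0:ℝ) 1, y ^ (-(1/α)) * (1 - y ^ r) * (1 - y) ^ (1/α - 2)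
      = r * Beta (r + 1 - 1/α) (1/α) / (1 - 1/α) := by
  obtain ⟨hα1, -⟩ := hα
  have hα0 : 0 < α := by linarith
  exact integral_rpow_neg_mul_one_sub_rpow_mul (one_div_pos.2 hα0) ((div_lt_one hα0).2 hα1) hr.le
end
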